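/- (Chi-squared concentration inequality.) Let k be a positive natural number and ε ∈ (0,1). Let μ be the product measure on ℝ^(Fin k) of k copies of the standard Gaussian measure (mean 0, variance 1) on ℝ. Then μ{ z : (1−ε)·k ≤ Σ_{i=1}^{k} z_i² ≤ (1+ε)·k } ≥ 1 − 2·exp(−(ε²−ε³)·k/4). -/

import Mathlib

/-!
Chernoff bound. Under the product of standard Gaussians the moment generating function of
`∑ zᵢ²` is `(1 - 2t)^(-k/2)`. The choice `t = ε / (2(1 + ε))` bounds the upper tail by
`exp (k/2 · (log (1 + ε) - ε))`, and `t = -ε/2` bounds the lower tail by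
`exp (k/2 · (ε - ε² - log (1 + ε)))`; both are at most `exp (-(ε² - ε³) k / 4)` because
`x - x²/2 ≤ log (1 + x) ≤ x - x²/2 + x³/2` for `x ≥ 0`.
-/

open MeasureTheory ProbabilityTheory Real
open scoped NNReal

namespace Real

lemma log_one_add_le_of_nonneg {x : ℝ} (hx : 0 ≤ x) :
    log (1 + x) ≤ x - x ^ 2 / 2 + x ^ 3 / 2 := by
  rw [log_le_iff_le_exp (by linarith)]
  have hu : 0 ≤ x - x ^ 2 / 2 + x ^ 3 / 2 := by nlinarith [sq_nonneg (x - 1)]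
  refine le_trans ?_ (quadratic_le_exp_of_nonneg hu)
  nlinarith [pow_nonneg hx 4, mul_nonneg (pow_nonneg hx 4) (sq_nonneg (x - 1))]

lemma sub_sq_div_two_le_log_one_add {x : ℝ} (hx : 0 ≤ x) : x - x ^ 2 / 2 ≤ log (1 + x) := by
  refine le_trans ?_ (le_log_one_add_of_nonneg hx)
  rw [le_div_iff₀ (by linarith)]
  nlinarith [pow_nonneg hx 3]

end Real

namespace ProbabilityTheory

section Gaussian

variable {v : ℝ≥0} {t : ℝ}

lemma gaussianPDFReal_zero_mul_exp_mul_sq (hv : v ≠ 0) (x : ℝ) :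
    gaussianPDFReal 0 v x * exp (t * x ^ 2)
      = (√(2 * π * v))⁻¹ * exp (-((1 - 2 * t * v) / (2 * v)) * x ^ 2) := by
  rw [gaussianPDFReal, mul_assoc, ← exp_add]
  have : (v : ℝ) ≠ 0 := by positivity
  congr 2
  field_simp
  ring

lemma integrable_exp_mul_sq_gaussianReal (hv : v ≠ 0) (ht : 2 * t * v < 1) :
    Integrable (fun x ↦ exp (t * x ^ 2)) (gaussianReal 0 v) := by
  have hb : 0 < (1 - 2 * t * v) / (2 * v) := div_pos (by linarith) (by positivity)
  rw [gaussianReal_of_var_ne_zero 0 hv, gaussianPDF_def, integrable_withDensity_iff_integrable_smul'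
    (by fun_prop) (ae_of_all _ fun _ ↦ ENNReal.ofReal_lt_top)]
  simp_rw [ENNReal.toReal_ofReal (gaussianPDFReal_nonneg _ _ _), smul_eq_mul,
    gaussianPDFReal_zero_mul_exp_mul_sq hv]
  exact (integrable_exp_neg_mul_sq hb).const_mul _

lemma integral_exp_mul_sq_gaussianReal (hv : v ≠ 0) (ht : 2 * t * v < 1) :
    ∫ x, exp (t * x ^ 2) ∂gaussianReal 0 v = (1 - 2 * t * v) ^ (-(1 / 2) : ℝ) := by
  rw [integral_gaussianReal_eq_integral_smul hv]
  simp_rw [smul_eq_mul, gaussianPDFReal_zero_mul_exp_mul_sq hv]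
  rw [integral_const_mul, integral_gaussian, div_div_eq_mul_div, mul_left_comm, ← mul_assoc,
    sqrt_div' _ (by linarith), div_eq_mul_inv, inv_mul_cancel_left₀ (by positivity),
    sqrt_eq_rpow, rpow_neg (by linarith)]

end Gaussian

lemma mgf_sum_pi {ι E : Type*} [Fintype ι] [MeasurableSpace E] (ν : Measure E) [SigmaFinite ν]
    (f : E → ℝ) (t : ℝ) :
    mgf (fun z : ι → E ↦ ∑ i, f (z i)) (Measure.pi fun _ ↦ ν) t
      = mgf f ν t ^ Fintype.card ι := by
  simp_rw [mgf, Finset.mul_sum, exp_sum]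
  exact integral_fintype_prod_eq_pow (𝕜 := ℝ) (μ := ν) (fun x ↦ exp (t * f x))

lemma integrable_exp_mul_sum_pi {ι E : Type*} [Fintype ι] [MeasurableSpace E] (ν : Measure E)
    [SigmaFinite ν] {f : E → ℝ} {t : ℝ} (hf : Integrable (fun x ↦ exp (t * f x)) ν) :
    Integrable (fun z : ι → E ↦ exp (t * ∑ i, f (z i))) (Measure.pi fun _ ↦ ν) := by
  simp_rw [Finset.mul_sum, exp_sum]
  exact Integrable.fintype_prod fun _ ↦ hf

section ChiSquared

variable {ι : Type*} [Fintype ι]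

lemma mgf_sum_sq_pi_gaussianReal {v : ℝ≥0} {t : ℝ} (hv : v ≠ 0) (ht : 2 * t * v < 1) :
    mgf (fun z : ι → ℝ ↦ ∑ i, z i ^ 2) (Measure.pi fun _ ↦ gaussianReal 0 v) t
      = (1 - 2 * t * v) ^ (-(Fintype.card ι / 2 : ℝ)) := by
  rw [mgf_sum_pi _ (fun x ↦ x ^ 2), mgf, integral_exp_mul_sq_gaussianReal hv ht,
    ← rpow_mul_natCast (by linarith)]
  ring_nf

lemma measureReal_sum_sq_ge_le_exp {ε : ℝ} (hε : 0 ≤ ε) :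
    (Measure.pi fun _ : ι ↦ gaussianReal 0 1).real
        {z | (1 + ε) * Fintype.card ι ≤ ∑ i, z i ^ 2}
      ≤ exp (-(ε ^ 2 - ε ^ 3) * Fintype.card ι / 4) := by
  set t := ε / (2 * (1 + ε))
  have ht : 2 * t * ((1 : ℝ≥0) : ℝ) < 1 := by
    simp only [NNReal.coe_one, mul_one, t]
    rw [mul_div_assoc', div_lt_one (by positivity)]
    linarith
  have h2t : 1 - 2 * t * ((1 : ℝ≥0) : ℝ) = (1 + ε)⁻¹ := by
    simp only [NNReal.coe_one, mul_one, t]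
    field_simp
    ring
  refine (measure_ge_le_exp_mul_mgf _ (by positivity) (integrable_exp_mul_sum_pi _
    (integrable_exp_mul_sq_gaussianReal one_ne_zero ht))).trans ?_
  rw [mgf_sum_sq_pi_gaussianReal one_ne_zero ht, h2t, rpow_def_of_pos (by positivity), log_inv,
    ← exp_add, exp_le_exp]
  have hlog := log_one_add_le_of_nonneg hε
  have hk : (0 : ℝ) ≤ Fintype.card ι := by positivity
  calc -t * ((1 + ε) * Fintype.card ι) + -log (1 + ε) * -(Fintype.card ι / 2 : ℝ)
      = Fintype.card ι / 2 * (log (1 + ε) - ε) := by simp only [t]; field_simp; ring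
    _ ≤ Fintype.card ι / 2 * (-(ε ^ 2 - ε ^ 3) / 2) := by gcongr; linarith
    _ = -(ε ^ 2 - ε ^ 3) * Fintype.card ι / 4 := by ring

lemma measureReal_sum_sq_le_le_exp {ε : ℝ} (hε : 0 ≤ ε) :
    (Measure.pi fun _ : ι ↦ gaussianReal 0 1).real
        {z | ∑ i, z i ^ 2 ≤ (1 - ε) * Fintype.card ι}
      ≤ exp (-(ε ^ 2 - ε ^ 3) * Fintype.card ι / 4) := by
  have ht : 2 * (-ε / 2) * ((1 : ℝ≥0) : ℝ) < 1 := by rw [NNReal.coe_one]; linarith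
  have h2t : 1 - 2 * (-ε / 2) * ((1 : ℝ≥0) : ℝ) = 1 + ε := by rw [NNReal.coe_one]; ring
  refine (measure_le_le_exp_mul_mgf _ (by linarith) (integrable_exp_mul_sum_pi _
    (integrable_exp_mul_sq_gaussianReal one_ne_zero ht))).trans ?_
  rw [mgf_sum_sq_pi_gaussianReal one_ne_zero ht, h2t, rpow_def_of_pos (by positivity),
    ← exp_add, exp_le_exp]
  have hlog := sub_sq_div_two_le_log_one_add hε
  have hk : (0 : ℝ) ≤ Fintype.card ι := by positivity
  calc -(-ε / 2) * ((1 - ε) * Fintype.card ι) + log (1 + ε) * -(Fintype.card ι / 2 : ℝ)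
      = Fintype.card ι / 2 * (ε - ε ^ 2 - log (1 + ε)) := by ring
    _ ≤ Fintype.card ι / 2 * (-(ε ^ 2 - ε ^ 3) / 2) := by gcongr; nlinarith [pow_nonneg hε 3]
    _ = -(ε ^ 2 - ε ^ 3) * Fintype.card ι / 4 := by ring

end ChiSquared

end ProbabilityTheory

theorem chi_squared_concentration_general
    (k : ℕ) (ε : ℝ) (hε0 : 0 < ε) :
    (Measure.pi fun _ : Fin k => gaussianReal 0 1)
      {z : Fin k → ℝ |
        (1 - ε) * k ≤ ∑ i, z i ^ 2 ∧ ∑ i, z i ^ 2 ≤ (1 + ε) * k}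
      ≥ ENNReal.ofReal (1 - 2 * Real.exp (-(ε ^ 2 - ε ^ 3) * k / 4)) := by
  set μ := Measure.pi fun _ : Fin k => gaussianReal 0 1
  set A := {z : Fin k → ℝ | (1 - ε) * k ≤ ∑ i, z i ^ 2 ∧ ∑ i, z i ^ 2 ≤ (1 + ε) * k}
  have hlower := measureReal_sum_sq_le_le_exp (ι := Fin k) hε0.le
  have hupper := measureReal_sum_sq_ge_le_exp (ι := Fin k) hε0.le
  rw [Fintype.card_fin] at hlower hupper
  set L := {z : Fin k → ℝ | ∑ i, z i ^ 2 ≤ (1 - ε) * k}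
  set U := {z : Fin k → ℝ | (1 + ε) * k ≤ ∑ i, z i ^ 2}
  have hcompl : Aᶜ ⊆ L ∪ U := by
    intro z hz
    simp only [A, Set.mem_compl_iff, Set.mem_ofPred_eq, not_and_or, not_le] at hz
    exact hz.imp le_of_lt le_of_lt
  have hA : 1 ≤ μ.real A + μ.real Aᶜ := by
    simpa using measureReal_union_le (μ := μ) A Aᶜ
  rw [ge_iff_le, ← ofReal_measureReal]
  refine ENNReal.ofReal_le_ofReal ?_
  linarith [measureReal_mono (μ := μ) hcompl, measureReal_union_le (μ := μ) L U]

/-- **Chi-squared concentration inequality.** Let `k > 0`, `ε ∈ (0,1)` and let `μ` be the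
`k`-fold product of standard Gaussian measures on `ℝ^(Fin k)`. Then
`μ { z : (1−ε) k ≤ Σ z_i² ≤ (1+ε) k } ≥ 1 − 2 exp(−(ε²−ε³) k/4)`. -/
theorem chi_squared_concentration
    (k : ℕ) (hk : 0 < k) (ε : ℝ) (hε0 : 0 < ε) (hε1 : ε < 1) :
    (Measure.pi fun _ : Fin k => gaussianReal 0 1)
      {z : Fin k → ℝ |
        (1 - ε) * k ≤ ∑ i, z i ^ 2 ∧ ∑ i, z i ^ 2 ≤ (1 + ε) * k}
      ≥ ENNReal.ofReal (1 - 2 * Real.exp (-(ε ^ 2 - ε ^ 3) * k / 4)) :=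
  chi_squared_concentration_general k ε hε0
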